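/- arXiv:2103.03942 — 2 statements merged into one kernel-verified Lean document; each statement's English description precedes it below -/
import Mathlib

section
/- Let p > 3 be a prime. For the one-parameter family y² = x³ + t x² + t², the first-moment sum satisfies ∑_{t mod p} a_t(p) = −p, where a_t(p) := −∑_{x mod p} χ(x³ + t x² + t²). -/
/-!
Swapping the two sums, the inner sum is, for fixed `x`, a character sum of the quadratic
polynomial `t² + x² t + x³` in `t`. Completing the square and counting square roots turns such a
sum into a Jacobi sum of the quadratic character, so it equals `-1` unless the discriminant
`x³ (x - 4)` vanishes, in which case it equals `p - 1`. The discriminant vanishes exactly at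
`x = 0` and `x = 4`, so the double sum is `2 (p - 1) - (p - 2) = p`.
-/

open Finset

section QuadraticCharSums

variable {F : Type*} [Field F] [Fintype F] [DecidableEq F]

local notation "χ" => quadraticChar F

lemma quadraticChar_sum_mul_add_eq_neg_one (hF : ringChar F ≠ 2) {a : F} (ha : a ≠ 0) :
    ∑ v : F, χ v * χ (v + a) = -1 := by
  have hJ : ∑ x : F, χ x * χ (1 - x) = -χ (-1) := by
    simpa [jacobiSum, (quadraticChar_isQuadratic F).inv] using
      jacobiSum_nontrivial_inv (quadraticChar_ne_one hF)
  calc ∑ v : F, χ v * χ (v + a)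
      = ∑ x : F, χ (-a * x) * χ (-a * x + a) :=
        (Fintype.sum_equiv (Equiv.mulLeft₀ (-a) (neg_ne_zero.2 ha)) _ _ fun _ ↦ rfl).symm
    _ = ∑ x : F, χ (-1) * (χ x * χ (1 - x)) := by
        refine sum_congr rfl fun x _ ↦ ?_
        rw [show -a * x + a = a * (1 - x) by ring, show -a * x = -1 * (a * x) by ring,
          map_mul, map_mul, map_mul]
        linear_combination (χ (-1) * χ x * χ (1 - x)) * quadraticChar_sq_one ha
    _ = -1 := by
        rw [← mul_sum, hJ]
        linear_combination -quadraticChar_sq_one (neg_ne_zero.2 (one_ne_zero (α := F)))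

lemma quadraticChar_sum_sq : ∑ u : F, χ (u ^ 2) = Fintype.card F - 1 := by
  have h (u : F) : χ (u ^ 2) = 1 - if u = 0 then 1 else 0 := by
    split_ifs with hu
    · simp [hu]
    · rw [quadraticChar_sq_one' hu, sub_zero]
  simp [h, sum_sub_distrib]

lemma quadraticChar_sum_sq_add (hF : ringChar F ≠ 2) (c : F) :
    ∑ u : F, χ (u ^ 2 + c) = if c = 0 then (Fintype.card F : ℤ) - 1 else -1 := by
  split_ifs with hc
  · simp only [hc, add_zero, quadraticChar_sum_sq]
  have hsqrts (w : F) : (#{u : F | u ^ 2 = w} : ℤ) = χ w + 1 := by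
    rw [← quadraticChar_card_sqrts hF w]; congr 2; ext; simp
  have hshift : ∑ w : F, χ (w + c) = 0 :=
    (Fintype.sum_equiv (Equiv.addRight c) _ _ fun _ ↦ rfl).trans (quadraticChar_sum_zero hF)
  calc ∑ u : F, χ (u ^ 2 + c)
      = ∑ w : F, #{u : F | u ^ 2 = w} * χ (w + c) := by
        rw [← sum_fiberwise univ (fun u : F ↦ u ^ 2)]
        refine sum_congr rfl fun w _ ↦ ?_
        rw [sum_congr rfl fun u hu ↦ by rw [(mem_filter.1 hu).2], sum_const, nsmul_eq_mul]
    _ = ∑ w : F, χ w * χ (w + c) + ∑ w : F, χ (w + c) := by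
        simp only [hsqrts, add_mul, one_mul, sum_add_distrib]
    _ = -1 := by rw [quadraticChar_sum_mul_add_eq_neg_one hF hc, hshift, add_zero]

theorem quadraticChar_sum_quadratic (hF : ringChar F ≠ 2) {a : F} (ha : a ≠ 0) (b c : F) :
    ∑ x : F, χ (a * x ^ 2 + b * x + c) =
      if discrim a b c = 0 then ((Fintype.card F : ℤ) - 1) * χ a else -χ a := by
  have h2a : 2 * a ≠ 0 := mul_ne_zero (Ring.two_ne_zero hF) ha
  have hsq (x : F) :
      χ (a * x ^ 2 + b * x + c) = χ a * χ ((2 * a * x + b) ^ 2 + -discrim a b c) := by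
    rw [show (2 * a * x + b) ^ 2 + -discrim a b c = 2 ^ 2 * a * (a * x ^ 2 + b * x + c) by
      rw [discrim]; ring, map_mul, map_mul, quadraticChar_sq_one' (Ring.two_ne_zero hF)]
    linear_combination (-χ (a * x ^ 2 + b * x + c)) * quadraticChar_sq_one ha
  have haff : ∑ x : F, χ ((2 * a * x + b) ^ 2 + -discrim a b c) =
      ∑ u : F, χ (u ^ 2 + -discrim a b c) :=
    Fintype.sum_equiv ((Equiv.mulLeft₀ _ h2a).trans (Equiv.addRight b)) _ _ fun _ ↦ rfl
  rw [sum_congr rfl fun x _ ↦ hsq x, ← mul_sum, haff, quadraticChar_sum_sq_add hF]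
  simp only [neg_eq_zero]
  split_ifs <;> ring

end QuadraticCharSums

/-- For a prime `p > 3` and the family `y² = x³ + t x² + t²`, the
first-moment sum equals `-p`. -/
theorem first_moment_family_three (p : ℕ) [Fact p.Prime] (hp : 3 < p) :
    ∑ t : ZMod p,
      (-∑ x : ZMod p,
        legendreSym p ((x.val : ℤ) ^ 3 + (t.val : ℤ) * (x.val : ℤ) ^ 2 + (t.val : ℤ) ^ 2)) =
      -(p : ℤ) := by
  have hF : ringChar (ZMod p) ≠ 2 := by rw [ZMod.ringChar_zmod_n]; omega
  have h4 : (4 : ZMod p) ≠ 0 := by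
    simpa [← two_add_two_eq_four, ← two_mul] using Ring.two_ne_zero hF
  have hleg (x t : ZMod p) :
      legendreSym p ((x.val : ℤ) ^ 3 + (t.val : ℤ) * (x.val : ℤ) ^ 2 + (t.val : ℤ) ^ 2) =
        quadraticChar (ZMod p) (1 * t ^ 2 + x ^ 2 * t + x ^ 3) := by
    rw [legendreSym]; push_cast [ZMod.natCast_val, ZMod.cast_id]; ring_nf
  have hdisc (x : ZMod p) : discrim 1 (x ^ 2) (x ^ 3) = 0 ↔ x ∈ ({0, 4} : Finset (ZMod p)) := by
    rw [discrim, show (x ^ 2) ^ 2 - 4 * 1 * x ^ 3 = x ^ 3 * (x - 4) by ring]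
    simp [sub_eq_zero]
  simp_rw [hleg, sum_neg_distrib, neg_inj]
  rw [sum_comm]
  simp_rw [quadraticChar_sum_quadratic hF one_ne_zero, map_one, mul_one, hdisc]
  have hsplit (x : ZMod p) : (if x ∈ ({0, 4} : Finset (ZMod p)) then (p : ℤ) - 1 else -1) =
      (if x ∈ ({0, 4} : Finset (ZMod p)) then (p : ℤ) else 0) - 1 := by
    split_ifs <;> ring
  simp only [ZMod.card, hsplit, sum_sub_distrib, sum_ite_mem, univ_inter, sum_const,
    card_pair h4.symm, card_univ]
  ring
end

section
/- Let p ≥ 5 be a prime. For the two-parameter family y² = x³ + t² x² + (t³ − t²) s x, the second-moment sum satisfies ∑_{t mod p} ∑_{s mod p} a_{t,s}(p)² = p³ − 3p² + 3p − δ_{1,4}(p)·(2p² − 4p), where a_{t,s}(p) := −∑_{x mod p} χ(x³ + t² x² + (t³ − t²) s x). -/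
/-!
Write `χ` for the quadratic character of a finite field of odd order `q`. Since
`χ(x³ + A x² + b x) = χ(x) χ(b + x² + A x)`, expanding the square and summing over `b` first
leaves the sums `∑_b χ((b + u)(b + v)) = q [u = v] - 1` (for `u ≠ v` a Jacobi sum). As
`∑ χ = 0`, for `A ≠ 0` the second moment over `b` becomes `q ∑ χ(x) χ(y)` over the pairs with
`x² + A x = y² + A y`, i.e. `y = x` or `y = -x - A`, which gives `q (q - 2 - χ(-1))`.
For `t ∉ {0, 1}` the substitution `b = (t³ - t²) s` puts the slice `t` in this form with
`A = t²`; the slice `t = 0` vanishes, `t = 1` contributes `q`, and `χ(-1) = 1` exactly when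
`q ≡ 1 mod 4`.
-/

open Finset

theorem Finset.sum_pair_eq_add_sub {α M : Type*} [DecidableEq α] [AddCommGroup M] (f : α → M)
    (a b : α) :
    ∑ y ∈ {a, b}, f y = f a + f b - if a = b then f a else 0 := by
  by_cases h : a = b
  · simp [h]
  · simp [sum_pair h, h]

section CharacterSums

variable {F : Type*} [Field F] [Fintype F] [DecidableEq F]

local notation "χ" => quadraticChar F
local notation "q" => (Fintype.card F : ℤ)

theorem sum_quadraticChar_sq_mul (f : F → F) :
    ∑ x, χ (x ^ 2 * f x) = ∑ x, χ (f x) - χ (f 0) := by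
  rw [sum_eq_sum_sdiff_singleton_add (mem_univ 0), sum_eq_sum_sdiff_singleton_add (mem_univ 0)]
  rw [zero_pow two_ne_zero, zero_mul, MulChar.map_zero, add_zero, add_sub_cancel_right]
  refine sum_congr rfl fun x hx => ?_
  rw [map_mul, quadraticChar_sq_one' (by simpa using hx), one_mul]

theorem sum_quadraticChar_mul_add (hF : ringChar F ≠ 2) (d : F) :
    ∑ z, χ (z * (z + d)) = (if d = 0 then q else 0) - 1 := by
  split_ifs with hd
  · subst hd
    simpa [← sq] using sum_quadraticChar_sq_mul (fun _ : F => (1 : F))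
  · have hJ : ∑ x, χ x * χ (1 - x) = -χ (-1) := by
      simpa [jacobiSum, (quadraticChar_isQuadratic F).inv] using
        jacobiSum_nontrivial_inv (quadraticChar_ne_one hF)
    -- the substitution `z = -d x` turns `z (z + d)` into `-d² x (1 - x)`
    calc ∑ z, χ (z * (z + d)) = ∑ x, χ (-d * x * (-d * x + d)) :=
          (Equiv.sum_comp (Equiv.mulLeft₀ (-d) (neg_ne_zero.mpr hd)) fun z => χ (z * (z + d))).symm
      _ = ∑ x, χ (-1) * (χ x * χ (1 - x)) := by
          refine sum_congr rfl fun x _ => ?_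
          rw [show -d * x * (-d * x + d) = d ^ 2 * (-1 * (x * (1 - x))) by ring, map_mul,
            quadraticChar_sq_one' hd, one_mul, map_mul, map_mul]
      _ = -1 := by
          rw [← mul_sum, hJ, mul_neg, ← sq, quadraticChar_sq_one (neg_ne_zero.mpr one_ne_zero)]

theorem sum_quadraticChar_add_mul_add (hF : ringChar F ≠ 2) (u v : F) :
    ∑ b, χ ((b + u) * (b + v)) = (if u = v then q else 0) - 1 := by
  have := Equiv.sum_comp (Equiv.addRight u) fun z => χ (z * (z + (v - u)))
  simp only [Equiv.coe_addRight, add_add_sub_cancel] at this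
  simp only [this, sum_quadraticChar_mul_add hF, sub_eq_zero, eq_comm]

theorem filter_sq_add_mul_eq (A x : F) :
    ({y | x ^ 2 + A * x = y ^ 2 + A * y} : Finset F) = {x, -x - A} := by
  ext y
  simp only [mem_filter, mem_univ, true_and, mem_insert, mem_singleton]
  constructor
  · intro h
    have h0 : (y - x) * (y - (-x - A)) = 0 := by linear_combination -h
    rcases mul_eq_zero.mp h0 with h' | h'
    · exact Or.inl (sub_eq_zero.mp h')
    · exact Or.inr (sub_eq_zero.mp h')
  · rintro (rfl | rfl) <;> ring

theorem sum_ite_sq_add_mul_eq (A x : F) :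
    ∑ y, (if x ^ 2 + A * x = y ^ 2 + A * y then χ y else 0) =
      χ x + χ (-x - A) - if x = -x - A then χ x else 0 := by
  rw [← sum_filter, filter_sq_add_mul_eq, sum_pair_eq_add_sub]

theorem sum_quadraticChar_mul_self : ∑ x, χ x * χ x = q - 1 := by
  have h := sum_quadraticChar_sq_mul fun _ : F => (1 : F)
  simp only [mul_one, map_one, sum_const, card_univ, nsmul_eq_mul] at h
  rw [← h]
  exact sum_congr rfl fun x _ => by rw [sq, map_mul]

theorem sum_quadraticChar_mul_neg_sub (hF : ringChar F ≠ 2) {A : F} (hA : A ≠ 0) :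
    ∑ x, χ x * χ (-x - A) = -χ (-1) := by
  have h : ∀ x, χ x * χ (-x - A) = χ (-1) * χ (x * (x + A)) := fun x => by
    rw [← map_mul, ← map_mul]; ring_nf
  simp only [h, ← mul_sum, sum_quadraticChar_mul_add hF, if_neg hA, zero_sub, mul_neg_one]

theorem sum_quadraticChar_mul_ite_eq_neg_sub (hF : ringChar F ≠ 2) {A : F} (hA : A ≠ 0) :
    ∑ x, χ x * (if x = -x - A then χ x else 0) = 1 := by
  have h2 : (2 : F) ≠ 0 := Ring.two_ne_zero hF
  have hfix : ∀ x : F, x = -x - A ↔ x = -(A / 2) := fun x => by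
    constructor <;> intro h
    · field_simp; linear_combination h
    · rw [h]; field_simp; ring
  simp only [hfix, mul_ite, mul_zero, sum_ite_eq', mem_univ, if_true, ← sq]
  exact quadraticChar_sq_one (by simp [hA, h2] : -(A / 2) ≠ 0)

theorem sum_sq_sum_quadraticChar_cubic (hF : ringChar F ≠ 2) {A : F} (hA : A ≠ 0) :
    ∑ b, (∑ x, χ (x ^ 3 + A * x ^ 2 + b * x)) ^ 2 = q * (q - 2 - χ (-1)) := by
  have hfactor : ∀ b x : F, χ (x ^ 3 + A * x ^ 2 + b * x) = χ x * χ (b + (x ^ 2 + A * x)) :=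
    fun b x => by rw [← map_mul]; ring_nf
  calc ∑ b, (∑ x, χ (x ^ 3 + A * x ^ 2 + b * x)) ^ 2
      = ∑ b, ∑ x, ∑ y, χ x * χ y * χ ((b + (x ^ 2 + A * x)) * (b + (y ^ 2 + A * y))) := by
        refine sum_congr rfl fun b _ => ?_
        rw [sq, sum_mul_sum]
        simp only [hfactor, map_mul]
        refine sum_congr rfl fun x _ => sum_congr rfl fun y _ => ?_
        ring
    _ = ∑ x, ∑ y, χ x * χ y * ((if x ^ 2 + A * x = y ^ 2 + A * y then q else 0) - 1) := by
        rw [sum_comm]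
        refine sum_congr rfl fun x _ => ?_
        rw [sum_comm]
        simp only [← mul_sum, sum_quadraticChar_add_mul_add hF]
    _ = q * ∑ x, χ x * ∑ y, (if x ^ 2 + A * x = y ^ 2 + A * y then χ y else 0)
          - (∑ x, χ x) * ∑ y, χ y := by
        rw [sum_mul_sum]
        simp only [mul_sum, ← sum_sub_distrib]
        refine sum_congr rfl fun x _ => sum_congr rfl fun y _ => ?_
        split_ifs <;> ring
    _ = q * ∑ x, (χ x * χ x + χ x * χ (-x - A) - χ x * if x = -x - A then χ x else 0) := by
        simp only [quadraticChar_sum_zero hF, zero_mul, sub_zero, sum_ite_sq_add_mul_eq, mul_sub,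
          mul_add]
    _ = q * (q - 2 - χ (-1)) := by
        rw [sum_sub_distrib, sum_add_distrib, sum_quadraticChar_mul_self,
          sum_quadraticChar_mul_neg_sub hF hA, sum_quadraticChar_mul_ite_eq_neg_sub hF hA]
        ring

def twoParamCoeff (t s : F) : ℤ := -∑ x, χ (x ^ 3 + t ^ 2 * x ^ 2 + (t ^ 3 - t ^ 2) * s * x)

theorem twoParamCoeff_zero_left (hF : ringChar F ≠ 2) (s : F) : twoParamCoeff 0 s = 0 := by
  have h := sum_quadraticChar_sq_mul fun x : F => x
  rw [quadraticChar_sum_zero hF, MulChar.map_zero, sub_zero] at h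
  rw [twoParamCoeff, neg_eq_zero, ← h]
  exact sum_congr rfl fun x _ => by ring_nf

theorem twoParamCoeff_one_left (hF : ringChar F ≠ 2) (s : F) : twoParamCoeff 1 s = 1 := by
  have h := sum_quadraticChar_sq_mul fun x : F => x + 1
  have hshift : ∑ x : F, χ (x + 1) = 0 :=
    (Equiv.sum_comp (Equiv.addRight 1) _).trans (quadraticChar_sum_zero hF)
  rw [hshift, zero_add, map_one, zero_sub] at h
  rw [twoParamCoeff, neg_eq_iff_eq_neg, ← h]
  exact sum_congr rfl fun x _ => by ring_nf

theorem sum_sq_twoParamCoeff_of_ne (hF : ringChar F ≠ 2) {t : F} (ht0 : t ≠ 0) (ht1 : t ≠ 1) :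
    ∑ s, twoParamCoeff t s ^ 2 = q * (q - 2 - χ (-1)) := by
  have hc : t ^ 3 - t ^ 2 ≠ 0 := by
    rw [show t ^ 3 - t ^ 2 = t ^ 2 * (t - 1) by ring]
    exact mul_ne_zero (pow_ne_zero 2 ht0) (sub_ne_zero.mpr ht1)
  simp only [twoParamCoeff, neg_sq]
  rw [← sum_sq_sum_quadraticChar_cubic hF (pow_ne_zero 2 ht0)]
  exact Equiv.sum_comp (Equiv.mulLeft₀ (t ^ 3 - t ^ 2) hc)
    fun b => (∑ x, χ (x ^ 3 + t ^ 2 * x ^ 2 + b * x)) ^ 2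

theorem sum_sum_sq_twoParamCoeff (hF : ringChar F ≠ 2) :
    ∑ t : F, ∑ s : F, twoParamCoeff t s ^ 2 = q + (q - 2) * (q * (q - 2 - χ (-1))) := by
  have hcard : ((univ \ {0, 1} : Finset F).card : ℤ) = q - 2 := by
    rw [card_sdiff_of_subset (subset_univ _), card_pair zero_ne_one, card_univ,
      Nat.cast_sub (by simpa using card_le_univ ({0, 1} : Finset F))]
    rfl
  rw [← sum_sdiff (subset_univ {0, 1}), sum_pair zero_ne_one]
  simp only [twoParamCoeff_zero_left hF, twoParamCoeff_one_left hF]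
  rw [sum_congr rfl fun t ht => sum_sq_twoParamCoeff_of_ne hF (t := t) (by simp_all) (by simp_all)]
  simp only [zero_pow two_ne_zero, one_pow, sum_const_zero, sum_const, card_univ, nsmul_eq_mul,
    hcard, mul_one, zero_add]
  ring

end CharacterSums

/-- For a prime `p ≥ 5` and the two-parameter family
`y² = x³ + t² x² + (t³ - t²) s x`, the second-moment sum equals
`p³ - 3p² + 3p - δ_{1,4}(p) (2p² - 4p)`. -/
theorem second_moment_two_param_four (p : ℕ) [Fact p.Prime] (hp : 5 ≤ p) :
    ∑ t : ZMod p, ∑ s : ZMod p,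
      (-∑ x : ZMod p,
        legendreSym p ((x.val : ℤ) ^ 3 + (t.val : ℤ) ^ 2 * (x.val : ℤ) ^ 2
          + ((t.val : ℤ) ^ 3 - (t.val : ℤ) ^ 2) * (s.val : ℤ) * (x.val : ℤ))) ^ 2 =
      (p : ℤ) ^ 3 - 3 * (p : ℤ) ^ 2 + 3 * (p : ℤ)
        - (if p % 4 = 1 then 1 else 0) * (2 * (p : ℤ) ^ 2 - 4 * (p : ℤ)) := by
  have hF : ringChar (ZMod p) ≠ 2 := by rw [ZMod.ringChar_zmod_n]; omega
  have hodd : p % 2 = 1 := Nat.odd_iff.mp ((Fact.out : p.Prime).odd_of_ne_two (by omega))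
  have hcoeff : ∀ t s : ZMod p, twoParamCoeff t s = -∑ x : ZMod p,
      legendreSym p ((x.val : ℤ) ^ 3 + (t.val : ℤ) ^ 2 * (x.val : ℤ) ^ 2
        + ((t.val : ℤ) ^ 3 - (t.val : ℤ) ^ 2) * (s.val : ℤ) * (x.val : ℤ)) := fun t s => by
    simp [twoParamCoeff, legendreSym]
  simp only [← hcoeff]
  rw [sum_sum_sq_twoParamCoeff hF, quadraticChar_neg_one hF, ZMod.card,
    ZMod.χ₄_nat_eq_if_mod_four, if_neg (by omega)]
  split_ifs <;> ring
end
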